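/- arXiv:1403.7412 — 2 statements merged into one kernel-verified Lean document; each statement's English description precedes it below -/
import Mathlib

section
/- Let $\{a_{mj}\}_{j\ge 1}$, $1\le m\le n$, be sequences of positive real numbers such that for each fixed $m$, $\sum_{j=1}^\infty \min(a_{1j},\dots,a_{m-1,j},a_{m+1,j},\dots,a_{nj}) = \infty$. Define $u(z)=\sum_{j=1}^\infty \max(a_{1j}\log|z_1|,\dots,a_{nj}\log|z_n|)$ on the unit polydisc. Then for every $1\le m\le n$ and every $z\in\Delta^n$ with $z_m=0$ and $|z_l|<1$ for all $l\ne m$, the series defining $u(z)$ diverges to $-\infty$. -/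
/-! At a point with `z_m = 0` the `m`-th entry of every term is `-∞`, while for `l ≠ m` and
a radius `r < 1` bounding all `|z_l|` we have `a_{lj} log|z_l| ≤ (min_{l ≠ m} a_{lj}) log r`.
So the `j`-th term is at most `b_j log r` with `b_j = min_{l ≠ m} a_{lj}`, and since
`log r < 0` and `∑ b_j = ∞` the partial sums tend to `-∞`. -/

open Filter

noncomputable section

/-- Extended logarithm: `elog 0 = ⊥`. -/
def elog (x : ℝ) : EReal := if x = 0 then ⊥ else ((Real.log x : ℝ) : EReal)

theorem EReal.coe_finset_sum {ι : Type*} (s : Finset ι) (g : ι → ℝ) :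
    ((∑ i ∈ s, g i : ℝ) : EReal) = ∑ i ∈ s, (g i : EReal) :=
  map_sum (⟨⟨Real.toEReal, EReal.coe_zero⟩, EReal.coe_add⟩ : ℝ →+ EReal) g s

theorem coe_mul_elog_zero {a : ℝ} (ha : 0 < a) : (a : EReal) * elog 0 = ⊥ := by
  simp only [elog, if_true, EReal.coe_mul_bot_of_pos ha]

theorem coe_mul_elog_le {a x r : ℝ} (ha : 0 < a) (hx : 0 ≤ x) (hxr : x ≤ r) :
    (a : EReal) * elog x ≤ ((a * Real.log r : ℝ) : EReal) := by
  rcases hx.eq_or_lt with rfl | hx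
  · rw [coe_mul_elog_zero ha]
    exact bot_le
  · rw [elog, if_neg hx.ne', ← EReal.coe_mul, EReal.coe_le_coe_iff]
    exact mul_le_mul_of_nonneg_left (Real.log_le_log hx hxr) ha.le

theorem iSup_coe_mul_elog_le_of_eq_zero {ι : Type*} {a x : ι → ℝ} {b r : ℝ} {m : ι}
    (ha : ∀ l, 0 < a l) (hx : ∀ l, 0 ≤ x l) (hxr : ∀ l, x l ≤ r) (hr : r ≤ 1)
    (hxm : x m = 0) (hb : ∀ l, l ≠ m → b ≤ a l) :
    ⨆ l, (a l : EReal) * elog (x l) ≤ ((b * Real.log r : ℝ) : EReal) := by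
  refine iSup_le fun l => ?_
  rcases eq_or_ne l m with rfl | hlm
  · rw [hxm, coe_mul_elog_zero (ha l)]
    exact bot_le
  · have hlog : Real.log r ≤ 0 := Real.log_nonpos ((hx l).trans (hxr l)) hr
    calc (a l : EReal) * elog (x l) ≤ ((a l * Real.log r : ℝ) : EReal) :=
          coe_mul_elog_le (ha l) (hx l) (hxr l)
      _ ≤ ((b * Real.log r : ℝ) : EReal) :=
          EReal.coe_le_coe_iff.2 (mul_le_mul_of_nonpos_right (hb l hlm) hlog)

theorem tendsto_sum_nhds_bot_of_le_mul_neg {u : ℕ → EReal} {b : ℕ → ℝ} {c : ℝ} (hc : c < 0)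
    (hb : Tendsto (fun N => ∑ j ∈ Finset.range N, b j) atTop atTop)
    (hu : ∀ j, u j ≤ ((b j * c : ℝ) : EReal)) :
    Tendsto (fun N => ∑ j ∈ Finset.range N, u j) atTop (nhds ⊥) := by
  have hbc : Tendsto (fun N => (((∑ j ∈ Finset.range N, b j) * c : ℝ) : EReal)) atTop (nhds ⊥) :=
    EReal.tendsto_coe_nhds_bot_iff.2 (hb.atTop_mul_const_of_neg' hc)
  refine tendsto_nhds_bot_mono' hbc fun N => ?_
  rw [Finset.sum_mul, EReal.coe_finset_sum]
  exact Finset.sum_le_sum fun j _ => hu j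

theorem stmt1_general (n : ℕ) (a : Fin n → ℕ → ℝ)
    (hpos : ∀ m j, 0 < a m j)
    (hdiv : ∀ m : Fin n,
      Tendsto (fun N => ∑ j ∈ Finset.range N, ⨅ l : {l : Fin n // l ≠ m}, a l.1 j)
        atTop atTop)
    (m : Fin n) (z : Fin n → ℂ) (hzm : z m = 0) (hz : ∀ l, ‖z l‖ < 1) :
    Tendsto
      (fun N => ∑ j ∈ Finset.range N, ⨆ l : Fin n, (a l j : EReal) * elog ‖z l‖)
      atTop (nhds (⊥ : EReal)) := by
  obtain ⟨r, hzr, hr1⟩ := exists_between ((pi_norm_lt_iff one_pos).2 hz)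
  have hlog : Real.log r < 0 := Real.log_neg ((norm_nonneg z).trans_lt hzr) hr1
  refine tendsto_sum_nhds_bot_of_le_mul_neg hlog (hdiv m) fun j => ?_
  refine iSup_coe_mul_elog_le_of_eq_zero (fun l => hpos l j) (fun l => norm_nonneg (z l))
    (fun l => (norm_le_pi_norm z l).trans hzr.le) hr1.le (by rw [hzm, norm_zero]) fun l hlm => ?_
  exact ciInf_le (Set.finite_range _).bddBelow (⟨l, hlm⟩ : {l : Fin n // l ≠ m})

/-- If for each `m` the minima over the other rows are not summable, then the series
`u(z) = ∑_j max_m (a_{mj} log|z_m|)` diverges to `-∞` at every point of the unit polydisc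
having `z_m = 0` for some `m` (the term `a_{mj} log 0 = -∞` being interpreted in `EReal`). -/
theorem stmt1 (n : ℕ) (hn : 2 ≤ n) (a : Fin n → ℕ → ℝ)
    (hpos : ∀ m j, 0 < a m j)
    (hdiv : ∀ m : Fin n,
      Tendsto (fun N => ∑ j ∈ Finset.range N, ⨅ l : {l : Fin n // l ≠ m}, a l.1 j)
        atTop atTop)
    (m : Fin n) (z : Fin n → ℂ) (hzm : z m = 0) (hz : ∀ l, ‖z l‖ < 1) :
    Tendsto
      (fun N => ∑ j ∈ Finset.range N, ⨆ l : Fin n, (a l j : EReal) * elog ‖z l‖)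
      atTop (nhds (⊥ : EReal)) :=
  stmt1_general n a hpos hdiv m z hzm hz
end
end

section
/- There exist sequences of positive reals $\{a_{mj}\}_{j\ge 1}$, $1\le m \le n$ (with $n\ge 2$), such that $\sum_{j=1}^\infty (a_{1j}\cdots a_{nj})^{1/n} < \infty$ while for every $1\le m\le n$, $\sum_{j=1}^\infty \min(a_{1j},\dots,a_{m-1,j},a_{m+1,j},\dots,a_{nj}) = \infty$. -/
/-!
Put a tiny entry `ε j = 2^(-n j)` in a single row `j mod n` of column `j` and `1` everywhere else.
The geometric mean of column `j` is `2^(-j)`, which is summable. But in every column whose tiny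
entry lies in row `m`, all remaining entries equal `1`, so for each `m` the minima over the rows
other than `m` equal `1` infinitely often and cannot be summable.
-/

open Filter

namespace Spike

variable {ι : Type*} [DecidableEq ι] (c : ℕ → ι) (ε : ℕ → ℝ)

noncomputable def spike (m : ι) (j : ℕ) : ℝ :=
  if m = c j then ε j else 1

variable {c ε}

theorem spike_pos (hε : ∀ j, 0 < ε j) (m : ι) (j : ℕ) : 0 < spike c ε m j := by
  unfold spike
  split
  exacts [hε j, one_pos]

theorem prod_spike [Fintype ι] (j : ℕ) : ∏ m, spike c ε m j = ε j := by
  simp [spike, Finset.prod_ite_eq']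

theorem iInf_spike_of_eq [Nontrivial ι] {m : ι} {j : ℕ} (hj : c j = m) :
    ⨅ l : {l : ι // l ≠ m}, spike c ε l.1 j = 1 := by
  have : Nonempty {l : ι // l ≠ m} := nonempty_subtype.mpr (exists_ne m)
  have hone : ∀ l : {l : ι // l ≠ m}, spike c ε l.1 j = 1 := fun l =>
    if_neg (hj ▸ l.2)
  simp only [hone, ciInf_const]

theorem iInf_spike_nonneg (hε : ∀ j, 0 ≤ ε j) (m : ι) (j : ℕ) :
    0 ≤ ⨅ l : {l : ι // l ≠ m}, spike c ε l.1 j := by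
  refine Real.iInf_nonneg fun l => ?_
  unfold spike
  split
  exacts [hε j, zero_le_one]

theorem tendsto_sum_iInf_spike [Nontrivial ι] (hε : ∀ j, 0 ≤ ε j) {m : ι}
    (hm : ∃ᶠ j in atTop, c j = m) :
    Tendsto (fun N => ∑ j ∈ Finset.range N, ⨅ l : {l : ι // l ≠ m}, spike c ε l.1 j)
      atTop atTop := by
  refine (not_summable_iff_tendsto_nat_atTop_of_nonneg (iInf_spike_nonneg hε m)).mp
    fun hsum => ?_
  have hsmall := hsum.tendsto_atTop_zero.eventually (gt_mem_nhds one_pos)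
  obtain ⟨j, hj, hlt⟩ := (hm.and_eventually hsmall).exists
  rw [iInf_spike_of_eq hj] at hlt
  exact lt_irrefl _ hlt

end Spike

open Spike

theorem Nat.frequently_atTop_mod_eq {n r : ℕ} (hr : r < n) : ∃ᶠ j in atTop, j % n = r :=
  frequently_atTop.mpr fun N =>
    ⟨n * N + r, by nlinarith, by rw [Nat.mul_add_mod, Nat.mod_eq_of_lt hr]⟩

/-- There exist positive sequences `a_{mj}` (`1 ≤ m ≤ n`, `n ≥ 2`) whose columnwise geometric
means are summable, while for every `m` the sums of the minima over the remaining rows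
diverge to `+∞`. -/
theorem stmt2 (n : ℕ) (hn : 2 ≤ n) :
    ∃ a : Fin n → ℕ → ℝ,
      (∀ m j, 0 < a m j) ∧
      (Summable fun j => (∏ m, a m j) ^ ((1 : ℝ) / n)) ∧
      ∀ m : Fin n,
        Tendsto (fun N => ∑ j ∈ Finset.range N, ⨅ l : {l : Fin n // l ≠ m}, a l.1 j)
          atTop atTop := by
  have : Nontrivial (Fin n) := Fin.nontrivial_iff_two_le.mpr hn
  let c : ℕ → Fin n := fun j => ⟨j % n, Nat.mod_lt j (by omega)⟩
  let ε : ℕ → ℝ := fun j => ((1 / 2) ^ j) ^ n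
  have hgeom (j : ℕ) : (∏ m, spike c ε m j) ^ ((1 : ℝ) / n) = (1 / 2) ^ j := by
    rw [prod_spike, one_div, Real.pow_rpow_inv_natCast (by positivity) (by omega)]
  refine ⟨spike c ε, spike_pos fun j => by positivity, ?_, fun m => ?_⟩
  · simpa only [hgeom] using summable_geometric_two
  · refine tendsto_sum_iInf_spike (fun j => by positivity) ?_
    exact (Nat.frequently_atTop_mod_eq m.isLt).mono fun j hj => Fin.ext hj
end
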